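/- arXiv:2012.04315 — 2 statements merged into one kernel-verified Lean document; each statement's English description precedes it below -/
import Mathlib

section
/- Let Ω, Ω₀ be p×p real symmetric positive definite matrices, ν, ν₀ > 0, and set a = λ_min(Ω₀^{1/2}Ω⁻¹Ω₀^{1/2}) and b = λ_max(Ω₀^{1/2}Ω⁻¹Ω₀^{1/2}). Then for every y ∈ ℝ^p, |log((ν + yᵀΩ⁻¹y)/(ν₀ + yᵀΩ₀⁻¹y))| ≤ max{ |log(min{a, ν/ν₀})|, |log(max{b, ν/ν₀})| }. -/
/-!
Put `S = Ω₀^{1/2}`, `H = S Ω⁻¹ S` and `z = S⁻¹ y`. Then `yᵀΩ₀⁻¹y = zᵀz` and `yᵀΩ⁻¹y = zᵀHz`, so the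
Rayleigh bounds give `a · yᵀΩ₀⁻¹y ≤ yᵀΩ⁻¹y ≤ b · yᵀΩ₀⁻¹y`. The ratio `(ν + yᵀΩ⁻¹y)/(ν₀ + yᵀΩ₀⁻¹y)` is
a mediant of `ν/ν₀` and `yᵀΩ⁻¹y / yᵀΩ₀⁻¹y`, hence lies in `[min{a, ν/ν₀}, max{b, ν/ν₀}]`, an
interval of positive numbers because `H` is positive definite; monotonicity of `log` concludes.
-/

open Matrix

lemma Real.abs_log_le_max_abs_log_of_le_of_le {m r M : ℝ} (hm : 0 < m) (hmr : m ≤ r)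
    (hrM : r ≤ M) : |Real.log r| ≤ max |Real.log m| |Real.log M| := by
  have hr : 0 < r := hm.trans_le hmr
  refine abs_le.mpr ⟨?_, ?_⟩
  · calc -max |Real.log m| |Real.log M| ≤ -|Real.log m| := neg_le_neg (le_max_left _ _)
      _ ≤ Real.log m := neg_abs_le _
      _ ≤ Real.log r := Real.log_le_log hm hmr
  · calc Real.log r ≤ Real.log M := Real.log_le_log hr hrM
      _ ≤ |Real.log M| := le_abs_self _
      _ ≤ max |Real.log m| |Real.log M| := le_max_right _ _

section Mediant

variable {a b ν ν₀ q q₀ : ℝ}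

lemma min_le_add_div_add (hν₀ : 0 < ν₀) (hq₀ : 0 ≤ q₀) (h : a * q₀ ≤ q) :
    min a (ν / ν₀) ≤ (ν + q) / (ν₀ + q₀) := by
  rw [le_div_iff₀ (by positivity), mul_add]
  gcongr ?_ + ?_
  · exact (mul_le_mul_of_nonneg_right (min_le_right _ _) hν₀.le).trans_eq
      (div_mul_cancel₀ ν hν₀.ne')
  · exact (mul_le_mul_of_nonneg_right (min_le_left _ _) hq₀).trans h

lemma add_div_add_le_max (hν₀ : 0 < ν₀) (hq₀ : 0 ≤ q₀) (h : q ≤ b * q₀) :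
    (ν + q) / (ν₀ + q₀) ≤ max b (ν / ν₀) := by
  rw [div_le_iff₀ (by positivity), mul_add]
  gcongr ?_ + ?_
  · exact (div_mul_cancel₀ ν hν₀.ne').symm.trans_le
      (mul_le_mul_of_nonneg_right (le_max_right _ _) hν₀.le)
  · exact h.trans (mul_le_mul_of_nonneg_right (le_max_left _ _) hq₀)

end Mediant

namespace Matrix

variable {n : Type*} [Fintype n] {S : Matrix n n ℝ}

lemma dotProduct_transpose_mul_mul_mulVec (B : Matrix n n ℝ) (u v : n → ℝ) :
    u ⬝ᵥ (Sᵀ * B * S) *ᵥ v = (S *ᵥ u) ⬝ᵥ B *ᵥ (S *ᵥ v) := by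
  rw [← mulVec_mulVec, ← mulVec_mulVec, dotProduct_mulVec u, vecMul_transpose]

variable [DecidableEq n]

lemma IsSymm.dotProduct_mulVec_eq_conj (hS : S.IsSymm) (hSu : IsUnit S) (B : Matrix n n ℝ)
    (y : n → ℝ) :
    y ⬝ᵥ B *ᵥ y = (S⁻¹ *ᵥ y) ⬝ᵥ (S * B * S) *ᵥ (S⁻¹ *ᵥ y) := by
  have hy : S *ᵥ S⁻¹ *ᵥ y = y := by
    rw [mulVec_mulVec, mul_nonsing_inv _ ((isUnit_iff_isUnit_det S).mp hSu), one_mulVec]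
  have h := dotProduct_transpose_mul_mul_mulVec (S := S) B (S⁻¹ *ᵥ y) (S⁻¹ *ᵥ y)
  rwa [hS.eq, hy, eq_comm] at h

lemma IsSymm.dotProduct_inv_mul_self_mulVec (hS : S.IsSymm) (y : n → ℝ) :
    y ⬝ᵥ (S * S)⁻¹ *ᵥ y = (S⁻¹ *ᵥ y) ⬝ᵥ (S⁻¹ *ᵥ y) := by
  have hSinv : S⁻¹ᵀ = S⁻¹ := by rw [transpose_nonsing_inv, hS.eq]
  have h := dotProduct_transpose_mul_mul_mulVec (S := S⁻¹) 1 y y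
  rwa [hSinv, mul_one, ← mul_inv_rev, one_mulVec] at h

section Eigenvalues

open scoped MatrixOrder

lemma IsHermitian.iInf_eigenvalues_mul_dotProduct_le {A : Matrix n n ℝ} (hA : A.IsHermitian)
    (z : n → ℝ) : (⨅ i, hA.eigenvalues i) * (z ⬝ᵥ z) ≤ z ⬝ᵥ A *ᵥ z := by
  have hle : algebraMap ℝ _ (⨅ i, hA.eigenvalues i) ≤ A := by
    refine algebraMap_le_of_le_spectrum (fun x hx => ?_) hA.isSelfAdjoint
    obtain ⟨i, rfl⟩ := hA.spectrum_real_eq_range_eigenvalues ▸ hx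
    exact ciInf_le (Finite.bddBelow_range _) i
  simpa [sub_mulVec, Algebra.algebraMap_eq_smul_one, smul_mulVec, dotProduct_sub] using
    (le_iff.mp hle).dotProduct_mulVec_nonneg z

lemma IsHermitian.dotProduct_mulVec_le_iSup_eigenvalues_mul {A : Matrix n n ℝ}
    (hA : A.IsHermitian) (z : n → ℝ) : z ⬝ᵥ A *ᵥ z ≤ (⨆ i, hA.eigenvalues i) * (z ⬝ᵥ z) := by
  have hle : A ≤ algebraMap ℝ _ (⨆ i, hA.eigenvalues i) := by
    refine le_algebraMap_of_spectrum_le (fun x hx => ?_) hA.isSelfAdjoint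
    obtain ⟨i, rfl⟩ := hA.spectrum_real_eq_range_eigenvalues ▸ hx
    exact le_ciSup (Finite.bddAbove_range _) i
  simpa [sub_mulVec, Algebra.algebraMap_eq_smul_one, smul_mulVec, dotProduct_sub] using
    (le_iff.mp hle).dotProduct_mulVec_nonneg z

end Eigenvalues

lemma PosDef.iInf_eigenvalues_pos [Nonempty n] {A : Matrix n n ℝ} (hA : A.PosDef) :
    0 < ⨅ i, hA.1.eigenvalues i := by
  obtain ⟨i, hi⟩ := exists_eq_ciInf_of_finite (f := hA.1.eigenvalues)
  exact hi ▸ hA.eigenvalues_pos i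

noncomputable def PosSemidef.spectralSqrt {A : Matrix n n ℝ} (hA : A.PosSemidef) :
    Matrix n n ℝ :=
  Unitary.conjStarAlgAut ℝ _ hA.1.eigenvectorUnitary (diagonal (Real.sqrt ∘ hA.1.eigenvalues))

lemma PosSemidef.spectralSqrt_mul_self {A : Matrix n n ℝ} (hA : A.PosSemidef) :
    hA.spectralSqrt * hA.spectralSqrt = A := by
  conv_rhs => rw [hA.1.spectral_theorem]
  rw [spectralSqrt, ← map_mul, diagonal_mul_diagonal]
  congr 2
  ext i
  simp [Real.mul_self_sqrt (hA.eigenvalues_nonneg i)]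

lemma PosSemidef.isSymm_spectralSqrt {A : Matrix n n ℝ} (hA : A.PosSemidef) :
    hA.spectralSqrt.IsSymm := by
  have h := (isHermitian_diagonal (Real.sqrt ∘ hA.1.eigenvalues)).isSelfAdjoint.map
    (Unitary.conjStarAlgAut ℝ _ hA.1.eigenvectorUnitary)
  rw [IsSymm, ← conjTranspose_eq_transpose_of_trivial]
  exact h

end Matrix

/-- With `a = λ_min(Ω₀^{1/2}Ω⁻¹Ω₀^{1/2})`, `b = λ_max(Ω₀^{1/2}Ω⁻¹Ω₀^{1/2})`,
for every `y ∈ ℝ^p`,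
`|log((ν + yᵀΩ⁻¹y)/(ν₀ + yᵀΩ₀⁻¹y))| ≤ max {|log(min{a, ν/ν₀})|, |log(max{b, ν/ν₀})|}`. -/
theorem stmt10 {p : ℕ} (Ω Ω₀ : Matrix (Fin p) (Fin p) ℝ)
    (hΩ : Ω.PosDef) (hΩ₀ : Ω₀.PosDef) (ν ν₀ : ℝ) (hν : 0 < ν) (hν₀ : 0 < ν₀)
    (hH : ((hΩ₀.posSemidef.1.eigenvectorUnitary.1 *
        diagonal (Real.sqrt ∘ hΩ₀.posSemidef.1.eigenvalues) *
        (star hΩ₀.posSemidef.1.eigenvectorUnitary : Matrix (Fin p) (Fin p) ℝ)) * Ω⁻¹ *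
      (hΩ₀.posSemidef.1.eigenvectorUnitary.1 *
        diagonal (Real.sqrt ∘ hΩ₀.posSemidef.1.eigenvalues) *
        (star hΩ₀.posSemidef.1.eigenvectorUnitary : Matrix (Fin p) (Fin p) ℝ))).IsHermitian) :
    ∀ y : Fin p → ℝ,
      |Real.log ((ν + y ⬝ᵥ Ω⁻¹ *ᵥ y) / (ν₀ + y ⬝ᵥ Ω₀⁻¹ *ᵥ y))| ≤
        max |Real.log (min (⨅ i, hH.eigenvalues i) (ν / ν₀))|
            |Real.log (max (⨆ i, hH.eigenvalues i) (ν / ν₀))| := by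
  intro y
  rcases isEmpty_or_nonempty (Fin p) with hp | hp
  -- for `p = 0` the infimum and supremum over the empty index type are `0`
  · simp [dotProduct, max_eq_right (div_pos hν hν₀).le]
  set S := hΩ₀.posSemidef.spectralSqrt
  have hSS : S * S = Ω₀ := hΩ₀.posSemidef.spectralSqrt_mul_self
  have hS : S.IsSymm := hΩ₀.posSemidef.isSymm_spectralSqrt
  have hSu : IsUnit S := isUnit_of_mul_isUnit_left (hSS ▸ hΩ₀.isUnit)
  set z := S⁻¹ *ᵥ y
  have hq : y ⬝ᵥ Ω⁻¹ *ᵥ y = z ⬝ᵥ (S * Ω⁻¹ * S) *ᵥ z := hS.dotProduct_mulVec_eq_conj hSu _ y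
  have hq₀ : y ⬝ᵥ Ω₀⁻¹ *ᵥ y = z ⬝ᵥ z := hSS ▸ hS.dotProduct_inv_mul_self_mulVec y
  have hz : 0 ≤ z ⬝ᵥ z := by simpa using dotProduct_star_self_nonneg z
  have hHpos : (S * Ω⁻¹ * S).PosDef := by
    simpa [conjTranspose_eq_transpose_of_trivial, hS.eq] using
      hΩ.inv.conjTranspose_mul_mul_same (mulVec_injective_of_isUnit hSu)
  rw [hq, hq₀]
  -- `hH` is a proof about `S * Ω⁻¹ * S`, up to unfolding `spectralSqrt`
  refine Real.abs_log_le_max_abs_log_of_le_of_le (lt_min hHpos.iInf_eigenvalues_pos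
    (div_pos hν hν₀)) (min_le_add_div_add hν₀ hz ?_) (add_div_add_le_max hν₀ hz ?_)
  · exact hH.iInf_eigenvalues_mul_dotProduct_le z
  · exact hH.dotProduct_mulVec_le_iSup_eigenvalues_mul z
end

section
/- Fix ν₀ > 2 and a p×p positive definite matrix Ω₀. For every ε > 0 there exists ε* > 0 such that for all ν > 2 and all positive definite Ω with |ν − ν₀| < ε* and d_∞(Ω, Ω₀) < ε*, the Kullback–Leibler divergence between the multivariate t-distributions t_p(ν₀, 0, Ω₀) and t_p(ν, 0, Ω) is less than ε. Equivalently, the max-norm ε*-neighborhood of (ν₀, Ω₀) is contained in the KL ε-neighborhood. -/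
open Matrix MeasureTheory

/-- The density of the `p`-dimensional multivariate t-distribution with `ν` degrees of
freedom, location `0` and positive definite scale matrix `Ω`. -/
noncomputable def tDensity {p : ℕ} (ν : ℝ) (Ω : Matrix (Fin p) (Fin p) ℝ)
    (y : Fin p → ℝ) : ℝ :=
  Real.Gamma ((ν + p) / 2) /
    (Real.Gamma (ν / 2) * (ν * Real.pi) ^ ((p : ℝ) / 2) * Real.sqrt Ω.det) *
    (1 + y ⬝ᵥ Ω⁻¹ *ᵥ y / ν) ^ (-(ν + p) / 2)

/-- The Kullback–Leibler divergence `KL((ν₀,Ω₀),(ν,Ω))` between the multivariate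
t-distributions `t_p(ν₀,0,Ω₀)` and `t_p(ν,0,Ω)`. -/
noncomputable def klT {p : ℕ} (ν₀ : ℝ) (Ω₀ : Matrix (Fin p) (Fin p) ℝ) (ν : ℝ)
    (Ω : Matrix (Fin p) (Fin p) ℝ) : ℝ :=
  ∫ y : Fin p → ℝ, Real.log (tDensity ν₀ Ω₀ y / tDensity ν Ω y) * tDensity ν₀ Ω₀ y

/-!
The divergence vanishes at `(ν, Ω) = (ν₀, Ω₀)`, so it suffices that it is continuous in `(ν, Ω)`
there, which is dominated convergence. Near `(ν₀, Ω₀)` one has `|log f(y; ν, Ω)| ≤ K (1 + ‖y‖)`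
uniformly, because `log (1 + q) ≤ 2 √q` and `yᵀ Ω⁻¹ y` is at most a continuous function of `Ω`
times `‖y‖²`; and `f(y; ν₀, Ω₀) ≤ D (1 + ‖y‖) ^ (-(ν₀ + p))`. The product of the two is
integrable on `ℝ^p` as soon as `ν₀ > 1`.
-/

open Filter Topology

theorem Real.log_one_add_le_two_mul_sqrt {x : ℝ} (hx : 0 ≤ x) : Real.log (1 + x) ≤ 2 * √x := by
  rw [Real.log_le_iff_le_exp (by linarith)]
  have := Real.quadratic_le_exp_of_nonneg (by positivity : 0 ≤ 2 * √x)
  nlinarith [Real.sq_sqrt hx, Real.sqrt_nonneg x]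

theorem Real.continuousAt_Gamma_of_pos {s : ℝ} (hs : 0 < s) : ContinuousAt Real.Gamma s :=
  (Real.differentiableAt_Gamma fun m => by linarith [(m.cast_nonneg : (0 : ℝ) ≤ m)]).continuousAt

namespace Matrix

variable {n : Type*} [Fintype n]

theorem dotProduct_mulVec_le_sum_abs_mul_norm_sq (M : Matrix n n ℝ) (y : n → ℝ) :
    y ⬝ᵥ M *ᵥ y ≤ (∑ i, ∑ j, |M i j|) * ‖y‖ ^ 2 := by
  have hy (i : n) : |y i| ≤ ‖y‖ := by simpa using norm_le_pi_norm y i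
  calc y ⬝ᵥ M *ᵥ y = ∑ i, ∑ j, M i j * (y i * y j) := by
        simp only [dotProduct, mulVec, Finset.mul_sum]; congr! 2; ring
    _ ≤ ∑ i, ∑ j, |M i j| * ‖y‖ ^ 2 := by
        refine Finset.sum_le_sum fun i _ => Finset.sum_le_sum fun j _ => ?_
        refine (le_abs_self _).trans ?_
        rw [abs_mul, abs_mul, sq]
        gcongr <;> exact hy _
    _ = (∑ i, ∑ j, |M i j|) * ‖y‖ ^ 2 := by simp only [Finset.sum_mul]

theorem PosDef.exists_pos_mul_norm_sq_le {M : Matrix n n ℝ} (hM : M.PosDef) :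
    ∃ m > 0, ∀ y : n → ℝ, m * ‖y‖ ^ 2 ≤ y ⬝ᵥ M *ᵥ y := by
  rcases isEmpty_or_nonempty n with hn | hn
  · exact ⟨1, one_pos, fun y => by simp [Subsingleton.elim y 0]⟩
  obtain ⟨z, hz, hmin⟩ := (isCompact_sphere (0 : n → ℝ) 1).exists_isMinOn
    (NormedSpace.sphere_nonempty.mpr zero_le_one)
    (by fun_prop : Continuous fun y : n → ℝ => y ⬝ᵥ M *ᵥ y).continuousOn
  have hz0 : z ≠ 0 := ne_zero_of_mem_unit_sphere ⟨z, hz⟩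
  refine ⟨z ⬝ᵥ M *ᵥ z, by simpa using hM.dotProduct_mulVec_pos hz0, fun y => ?_⟩
  rcases eq_or_ne y 0 with rfl | hy
  · simp
  have hny : 0 < ‖y‖ := norm_pos_iff.mpr hy
  have hu : ‖y‖⁻¹ • y ∈ Metric.sphere (0 : n → ℝ) 1 := by simp [norm_smul, hny.ne']
  calc z ⬝ᵥ M *ᵥ z * ‖y‖ ^ 2 ≤ (‖y‖⁻¹ • y) ⬝ᵥ M *ᵥ (‖y‖⁻¹ • y) * ‖y‖ ^ 2 := by
        gcongr; exact hmin hu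
    _ = y ⬝ᵥ M *ᵥ y := by
        simp only [mulVec_smul, dotProduct_smul, smul_dotProduct, smul_eq_mul]
        field_simp

theorem continuousAt_inv_of_det_ne_zero {K : Type*} [DecidableEq n] [Field K]
    [TopologicalSpace K] [IsTopologicalRing K] [ContinuousInv₀ K] {A : Matrix n n K}
    (hA : A.det ≠ 0) : ContinuousAt Inv.inv A :=
  continuousAt_matrix_inv A (by rw [Ring.inverse_eq_inv']; exact continuousAt_inv₀ hA)

instance firstCountableTopology {m α : Type*} [Countable m] [Countable n] [TopologicalSpace α]
    [FirstCountableTopology α] : FirstCountableTopology (Matrix m n α) :=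
  inferInstanceAs (FirstCountableTopology (m → n → α))

end Matrix

variable {p : ℕ}

/-- Pairs `(ν, Ω)` of degrees of freedom and scale matrix. -/
abbrev TParam (p : ℕ) : Type := ℝ × Matrix (Fin p) (Fin p) ℝ

def tParamDomain (p : ℕ) : Set (TParam p) := {x | 0 < x.1 ∧ x.2.PosDef}

noncomputable def tDensityConst (ν : ℝ) (Ω : Matrix (Fin p) (Fin p) ℝ) : ℝ :=
  Real.Gamma ((ν + p) / 2) /
    (Real.Gamma (ν / 2) * (ν * Real.pi) ^ ((p : ℝ) / 2) * Real.sqrt Ω.det)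

theorem tDensity_eq (ν : ℝ) (Ω : Matrix (Fin p) (Fin p) ℝ) (y : Fin p → ℝ) :
    tDensity ν Ω y = tDensityConst ν Ω * (1 + y ⬝ᵥ Ω⁻¹ *ᵥ y / ν) ^ (-(ν + p) / 2) := rfl

theorem tDensityConst_pos {ν : ℝ} (hν : 0 < ν) {Ω : Matrix (Fin p) (Fin p) ℝ} (hΩ : 0 < Ω.det) :
    0 < tDensityConst ν Ω := by
  unfold tDensityConst; positivity

theorem one_le_one_add_dotProduct_inv_mulVec_div {ν : ℝ} (hν : 0 ≤ ν)
    {Ω : Matrix (Fin p) (Fin p) ℝ} (hΩ : Ω.PosDef) (y : Fin p → ℝ) :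
    1 ≤ 1 + y ⬝ᵥ Ω⁻¹ *ᵥ y / ν := by
  have := hΩ.posSemidef.inv.dotProduct_mulVec_nonneg y
  simp only [star_trivial] at this
  have : 0 ≤ y ⬝ᵥ Ω⁻¹ *ᵥ y / ν := by positivity
  linarith

theorem tDensity_pos {ν : ℝ} (hν : 0 < ν) {Ω : Matrix (Fin p) (Fin p) ℝ} (hΩ : Ω.PosDef)
    (y : Fin p → ℝ) : 0 < tDensity ν Ω y := by
  have := one_le_one_add_dotProduct_inv_mulVec_div hν.le hΩ y
  rw [tDensity_eq]
  exact mul_pos (tDensityConst_pos hν hΩ.det_pos) (by positivity)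

theorem continuousAt_tDensityConst {x : TParam p} (hν : 0 < x.1) (hΩ : 0 < x.2.det) :
    ContinuousAt (fun x : TParam p => tDensityConst x.1 x.2) x := by
  have h1 : ContinuousAt (fun x : TParam p => Real.Gamma ((x.1 + p) / 2)) x :=
    (Real.continuousAt_Gamma_of_pos (by positivity)).comp (by fun_prop)
  have h2 : ContinuousAt (fun x : TParam p => Real.Gamma (x.1 / 2)) x :=
    (Real.continuousAt_Gamma_of_pos (by positivity)).comp (by fun_prop)
  unfold tDensityConst
  fun_prop (disch := first | positivity | (apply ne_of_gt; positivity))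

theorem continuousAt_tDensity {z : TParam p × (Fin p → ℝ)} (hν : 0 < z.1.1)
    (hΩ : z.1.2.PosDef) :
    ContinuousAt (fun z : TParam p × (Fin p → ℝ) => tDensity z.1.1 z.1.2 z.2) z := by
  have hinv : ContinuousAt (fun z : TParam p × (Fin p → ℝ) => z.1.2⁻¹) z :=
    (Matrix.continuousAt_inv_of_det_ne_zero hΩ.det_pos.ne').comp
      (f := fun z : TParam p × (Fin p → ℝ) => z.1.2) (by fun_prop)
  have hquad : ContinuousAt (fun z : TParam p × (Fin p → ℝ) => z.2 ⬝ᵥ z.1.2⁻¹ *ᵥ z.2) z :=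
    (by fun_prop : Continuous fun w : Matrix (Fin p) (Fin p) ℝ × (Fin p → ℝ) =>
      w.2 ⬝ᵥ w.1 *ᵥ w.2).continuousAt.comp
      (f := fun z : TParam p × (Fin p → ℝ) => (z.1.2⁻¹, z.2)) (hinv.prodMk continuousAt_snd)
  have hbase := one_le_one_add_dotProduct_inv_mulVec_div hν.le hΩ z.2
  exact ((continuousAt_tDensityConst hν hΩ.det_pos).comp continuousAt_fst).mul
    ((continuousAt_const.add (hquad.div (by fun_prop) hν.ne')).rpow (by fun_prop)
      (Or.inl (by positivity)))

theorem continuous_tDensity {ν : ℝ} (hν : 0 < ν) {Ω : Matrix (Fin p) (Fin p) ℝ}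
    (hΩ : Ω.PosDef) : Continuous (tDensity ν Ω) :=
  continuous_iff_continuousAt.2 fun y =>
    (continuousAt_tDensity (z := ((ν, Ω), y)) hν hΩ).comp (f := fun y => ((ν, Ω), y))
      (by fun_prop)

theorem abs_log_tDensity_le {ν : ℝ} (hν : 0 < ν) {Ω : Matrix (Fin p) (Fin p) ℝ}
    (hΩ : Ω.PosDef) (y : Fin p → ℝ) :
    |Real.log (tDensity ν Ω y)| ≤
      |Real.log (tDensityConst ν Ω)| + (ν + p) * √((∑ i, ∑ j, |Ω⁻¹ i j|) / ν) * ‖y‖ := by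
  set q := y ⬝ᵥ Ω⁻¹ *ᵥ y / ν
  have hq : 0 ≤ q := by linarith [one_le_one_add_dotProduct_inv_mulVec_div hν.le hΩ y]
  have hlog : Real.log (1 + q) ≤ 2 * (√((∑ i, ∑ j, |Ω⁻¹ i j|) / ν) * ‖y‖) :=
    calc Real.log (1 + q) ≤ 2 * √q := Real.log_one_add_le_two_mul_sqrt hq
      _ ≤ 2 * √((∑ i, ∑ j, |Ω⁻¹ i j|) / ν * ‖y‖ ^ 2) := by
          gcongr
          rw [div_mul_eq_mul_div]
          exact div_le_div_of_nonneg_right (Ω⁻¹.dotProduct_mulVec_le_sum_abs_mul_norm_sq y) hν.le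
      _ = 2 * (√((∑ i, ∑ j, |Ω⁻¹ i j|) / ν) * ‖y‖) := by
          rw [Real.sqrt_mul' _ (sq_nonneg _), Real.sqrt_sq (norm_nonneg _)]
  have hlog0 : 0 ≤ Real.log (1 + q) := Real.log_nonneg (by linarith)
  rw [tDensity_eq, Real.log_mul (tDensityConst_pos hν hΩ.det_pos).ne' (by positivity),
    Real.log_rpow (by positivity)]
  calc |Real.log (tDensityConst ν Ω) + -(ν + p) / 2 * Real.log (1 + q)|
      ≤ |Real.log (tDensityConst ν Ω)| + (ν + p) / 2 * Real.log (1 + q) := by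
        refine (abs_add_le _ _).trans_eq ?_
        rw [abs_mul, abs_div, abs_neg, abs_two, abs_of_nonneg (by positivity : 0 ≤ ν + p),
          abs_of_nonneg hlog0]
    _ ≤ _ := by nlinarith [(by positivity : (0 : ℝ) ≤ (ν + p) / 2)]

theorem exists_eventually_abs_log_tDensity_le {x₀ : TParam p} (hν : 0 < x₀.1)
    (hΩ : x₀.2.PosDef) :
    ∃ K, ∀ᶠ x in 𝓝[tParamDomain p] x₀, ∀ y, |Real.log (tDensity x.1 x.2 y)| ≤ K * (1 + ‖y‖) := by
  have hinv : ContinuousAt (fun x : TParam p => x.2⁻¹) x₀ :=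
    (Matrix.continuousAt_inv_of_det_ne_zero hΩ.det_pos.ne').comp continuousAt_snd
  have hsum : ContinuousAt (fun x : TParam p => ∑ i, ∑ j, |x.2⁻¹ i j|) x₀ :=
    (by fun_prop : Continuous fun M : Matrix (Fin p) (Fin p) ℝ => ∑ i, ∑ j, |M i j|)
      |>.continuousAt.comp (f := fun x : TParam p => x.2⁻¹) hinv
  let g (x : TParam p) : ℝ :=
    |Real.log (tDensityConst x.1 x.2)| + (x.1 + p) * √((∑ i, ∑ j, |x.2⁻¹ i j|) / x.1)
  have hg : ContinuousAt g x₀ :=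
    ((continuousAt_tDensityConst hν hΩ.det_pos).log
      (tDensityConst_pos hν hΩ.det_pos).ne').abs.add
      ((continuousAt_fst.add continuousAt_const).mul (hsum.div continuousAt_fst hν.ne').sqrt)
  refine ⟨g x₀ + 1, ?_⟩
  filter_upwards [nhdsWithin_le_nhds (hg.eventually (gt_mem_nhds (lt_add_one _))),
    self_mem_nhdsWithin] with x (hgx : g x < g x₀ + 1) ⟨hxν, hxΩ⟩ y
  have hc : 0 ≤ (x.1 + p) * √((∑ i, ∑ j, |x.2⁻¹ i j|) / x.1) := by positivity
  refine (abs_log_tDensity_le hxν hxΩ y).trans ?_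
  nlinarith [abs_nonneg (Real.log (tDensityConst x.1 x.2)), norm_nonneg y]

theorem exists_tDensity_le_mul_one_add_norm_rpow {ν : ℝ} (hν : 0 < ν)
    {Ω : Matrix (Fin p) (Fin p) ℝ} (hΩ : Ω.PosDef) :
    ∃ D, ∀ y, tDensity ν Ω y ≤ D * (1 + ‖y‖) ^ (-(ν + p)) := by
  obtain ⟨m, hm, hmq⟩ := hΩ.inv.exists_pos_mul_norm_sq_le
  set μ := min 1 (m / ν)
  have hμ : 0 < μ := by positivity
  refine ⟨tDensityConst ν Ω * (μ / 2) ^ (-(ν + p) / 2), fun y => ?_⟩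
  have hquad : μ * ‖y‖ ^ 2 ≤ y ⬝ᵥ Ω⁻¹ *ᵥ y / ν := by
    rw [le_div_iff₀ hν]
    calc μ * ‖y‖ ^ 2 * ν ≤ m / ν * ‖y‖ ^ 2 * ν := by gcongr; exact min_le_right _ _
      _ = m * ‖y‖ ^ 2 := by field_simp
      _ ≤ _ := hmq y
  -- `(1 + ‖y‖)² ≤ 2 (1 + ‖y‖²)`
  have hbase : μ / 2 * (1 + ‖y‖) ^ 2 ≤ 1 + y ⬝ᵥ Ω⁻¹ *ᵥ y / ν := by
    nlinarith [min_le_left 1 (m / ν), mul_nonneg hμ.le (sq_nonneg (1 - ‖y‖))]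
  rw [tDensity_eq, mul_assoc]
  refine mul_le_mul_of_nonneg_left ?_ (tDensityConst_pos hν hΩ.det_pos).le
  calc (1 + y ⬝ᵥ Ω⁻¹ *ᵥ y / ν) ^ (-(ν + p) / 2) ≤ (μ / 2 * (1 + ‖y‖) ^ 2) ^ (-(ν + p) / 2) :=
        Real.rpow_le_rpow_of_nonpos (by positivity) hbase
          (div_nonpos_of_nonpos_of_nonneg (neg_nonpos.2 (by positivity)) zero_le_two)
    _ = (μ / 2) ^ (-(ν + p) / 2) * (1 + ‖y‖) ^ (-(ν + p)) := by
        rw [Real.mul_rpow (by positivity) (by positivity), ← Real.rpow_natCast,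
          ← Real.rpow_mul (by positivity)]
        congr 2
        push_cast
        ring

theorem continuousWithinAt_klT {ν₀ : ℝ} (hν₀ : 1 < ν₀) {Ω₀ : Matrix (Fin p) (Fin p) ℝ}
    (hΩ₀ : Ω₀.PosDef) :
    ContinuousWithinAt (fun x : TParam p => klT ν₀ Ω₀ x.1 x.2) (tParamDomain p) (ν₀, Ω₀) := by
  have hν₀' : 0 < ν₀ := by linarith
  obtain ⟨K, hK⟩ := exists_eventually_abs_log_tDensity_le (x₀ := (ν₀, Ω₀)) hν₀' hΩ₀
  have hK₀ := hK.self_of_nhdsWithin ⟨hν₀', hΩ₀⟩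
  obtain ⟨D, hD⟩ := exists_tDensity_le_mul_one_add_norm_rpow hν₀' hΩ₀
  have hf₀ := tDensity_pos hν₀' hΩ₀
  refine continuousWithinAt_of_dominated
    (bound := fun y => 2 * K * D * (1 + ‖y‖) ^ (-(ν₀ + p - 1))) ?_ ?_ ?_ ?_
  · filter_upwards [self_mem_nhdsWithin] with x ⟨hxν, hxΩ⟩
    have hf := tDensity_pos hxν hxΩ
    exact ((((continuous_tDensity hν₀' hΩ₀).div (continuous_tDensity hxν hxΩ)
      fun y => (hf y).ne').log fun y => (div_pos (hf₀ y) (hf y)).ne').mul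
        (continuous_tDensity hν₀' hΩ₀)).aestronglyMeasurable
  · filter_upwards [hK, self_mem_nhdsWithin] with x hKx ⟨hxν, hxΩ⟩
    refine Eventually.of_forall fun y => ?_
    have hlog : |Real.log (tDensity ν₀ Ω₀ y / tDensity x.1 x.2 y)| ≤ 2 * K * (1 + ‖y‖) := by
      rw [Real.log_div (hf₀ y).ne' (tDensity_pos hxν hxΩ y).ne']
      linarith [abs_sub (Real.log (tDensity ν₀ Ω₀ y)) (Real.log (tDensity x.1 x.2 y)),
        hK₀ y, hKx y]
    calc ‖Real.log (tDensity ν₀ Ω₀ y / tDensity x.1 x.2 y) * tDensity ν₀ Ω₀ y‖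
        = |Real.log (tDensity ν₀ Ω₀ y / tDensity x.1 x.2 y)| * tDensity ν₀ Ω₀ y := by
          rw [Real.norm_eq_abs, abs_mul, abs_of_pos (hf₀ y)]
      _ ≤ 2 * K * (1 + ‖y‖) * (D * (1 + ‖y‖) ^ (-(ν₀ + p))) :=
          mul_le_mul hlog (hD y) (hf₀ y).le ((abs_nonneg _).trans hlog)
      _ = 2 * K * D * (1 + ‖y‖) ^ (-(ν₀ + p - 1)) := by
          rw [show -(ν₀ + p - 1) = 1 + -(ν₀ + p) by ring, Real.rpow_add (by positivity),
            Real.rpow_one]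
          ring
  · have : (Module.finrank ℝ (Fin p → ℝ) : ℝ) < ν₀ + p - 1 := by
      rw [Module.finrank_fin_fun]; linarith
    exact (integrable_one_add_norm this).const_mul _
  · refine Eventually.of_forall fun y => ContinuousAt.continuousWithinAt ?_
    have hf₀y := (hf₀ y).ne'
    exact ((continuousAt_const.div ((continuousAt_tDensity (z := ((ν₀, Ω₀), y)) hν₀' hΩ₀).comp
      (f := fun x : TParam p => (x, y)) (by fun_prop)) hf₀y).log
        (div_ne_zero hf₀y hf₀y)).mul continuousAt_const

theorem klT_self (ν : ℝ) (Ω : Matrix (Fin p) (Fin p) ℝ) : klT ν Ω ν Ω = 0 := by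
  simp [klT]

/-- Theorem 2: fix `ν₀ > 2` and PD `Ω₀`. For every `ε > 0` there is
`ε* > 0` such that `|ν − ν₀| < ε*` and `d_∞(Ω, Ω₀) < ε*` (for `ν > 2`, `Ω` PD) imply
`KL((ν₀,Ω₀),(ν,Ω)) < ε`. -/
theorem stmt14 {p : ℕ} (ν₀ : ℝ) (hν₀ : 2 < ν₀) (Ω₀ : Matrix (Fin p) (Fin p) ℝ)
    (hΩ₀ : Ω₀.PosDef) :
    ∀ ε > (0 : ℝ), ∃ εstar > (0 : ℝ),
      ∀ (ν : ℝ) (Ω : Matrix (Fin p) (Fin p) ℝ), 2 < ν → Ω.PosDef →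
        |ν - ν₀| < εstar → (∀ i j, |Ω i j - Ω₀ i j| < εstar) →
        klT ν₀ Ω₀ ν Ω < ε := by
  intro ε hε
  have hlim := continuousWithinAt_klT (by linarith : 1 < ν₀) hΩ₀
  -- `d_∞` is the sup distance on `Fin p → Fin p → ℝ`, the type underlying the matrices
  have hbox := hlim.comp (x := ((ν₀, fun i j => Ω₀ i j) : ℝ × (Fin p → Fin p → ℝ)))
    (f := fun x => (x.1, Matrix.of x.2))
    (continuous_fst.prodMk (continuous_matrix fun i j => by fun_prop)).continuousWithinAt
    (Set.mapsTo_preimage _ _)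
  obtain ⟨δ, hδ, hball⟩ := Metric.eventually_nhds_iff.1
    (eventually_nhdsWithin_iff.1 (hbox.eventually_lt_const ((klT_self ν₀ Ω₀).trans_lt hε)))
  refine ⟨δ, hδ, fun ν Ω hν hΩ hνδ hΩδ =>
    hball (y := (ν, fun i j => Ω i j)) ?_ ⟨by linarith, hΩ⟩⟩
  rw [Prod.dist_eq, max_lt_iff]
  exact ⟨hνδ, (dist_pi_lt_iff hδ).2 fun i => (dist_pi_lt_iff hδ).2 fun j => hΩδ i j⟩
end
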